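/- arXiv:math/0004005 — 7 statements merged into one kernel-verified Lean document; each statement's English description precedes it below -/
import Mathlib

section
/- Let Q ∈ ℚ^{2×2} be the matrix Q = (1/2)·[[1 - i·e₁, e₂ + i·e₃], [-e₂ + i·e₃, 1 + i·e₁]]. Then Q·Q = I₂ (so Q is its own inverse), and for every a = a₀ + a₁e₁ + a₂e₂ + a₃e₃ ∈ ℚ the universal similarity factorization equality Q · diag(a, a) · Q = ψ(a) holds, where the entries of the complex matrix ψ(a) are regarded as scalar complex quaternions. The matrix Q does not depend on a. -/
open Quaternion Matrix Complex

noncomputable section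

/-- The basis quaternion e₁ of the complex quaternion algebra. -/
def e1 : ℍ[ℂ] := ⟨0, 1, 0, 0⟩
/-- The basis quaternion e₂. -/
def e2 : ℍ[ℂ] := ⟨0, 0, 1, 0⟩
/-- The basis quaternion e₃. -/
def e3 : ℍ[ℂ] := ⟨0, 0, 0, 1⟩

/-- The complex matrix representation of a complex quaternion. -/
def psi (a : ℍ[ℂ]) : Matrix (Fin 2) (Fin 2) ℂ :=
  !![a.re + a.imI * I, -(a.imJ + a.imK * I);
     a.imJ - a.imK * I, a.re - a.imI * I]

/-- The universal matrix `Q`. -/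
def Qmat : Matrix (Fin 2) (Fin 2) ℍ[ℂ] :=
  (2 : ℂ)⁻¹ • !![1 - I • e1, e2 + I • e3; -e2 + I • e3, 1 + I • e1]

set_option maxHeartbeats 2000000 in
theorem stmt_1 :
    Qmat * Qmat = 1 ∧
      ∀ a : ℍ[ℂ],
        Qmat * !![a, 0; 0, a] * Qmat = (psi a).map (algebraMap ℂ ℍ[ℂ]) := by
  have hI : I * I = -1 := Complex.I_mul_I
  have he : e1.re = 0 ∧ e1.imI = 1 ∧ e1.imJ = 0 ∧ e1.imK = 0 ∧
      e2.re = 0 ∧ e2.imI = 0 ∧ e2.imJ = 1 ∧ e2.imK = 0 ∧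
      e3.re = 0 ∧ e3.imI = 0 ∧ e3.imJ = 0 ∧ e3.imK = 1 := by
    refine ⟨rfl, rfl, rfl, rfl, rfl, rfl, rfl, rfl, rfl, rfl, rfl, rfl⟩
  obtain ⟨h1, h2, h3, h4, h5, h6, h7, h8, h9, h10, h11, h12⟩ := he
  constructor
  · refine Matrix.ext fun i j => ?_
    fin_cases i <;> fin_cases j <;>
      (refine QuaternionAlgebra.ext ?_ ?_ ?_ ?_ <;>
        · simp [Qmat, h1, h2, h3, h4, h5, h6, h7, h8, h9, h10, h11, h12, Matrix.mul_apply, Fin.sum_univ_succ, Matrix.one_apply]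
          try ring_nf
          try simp [hI]
          try ring_nf)
  · intro a
    refine Matrix.ext fun i j => ?_
    fin_cases i <;> fin_cases j <;>
      (refine QuaternionAlgebra.ext ?_ ?_ ?_ ?_ <;>
        · simp [Qmat, psi, h1, h2, h3, h4, h5, h6, h7, h8, h9, h10, h11, h12, Matrix.mul_apply, Fin.sum_univ_succ,
            QuaternionAlgebra.coe_algebraMap]
          try ring_nf
          try simp [hI]
          try ring_nf)

end
end

section
/- For every complex quaternion a ∈ ℚ there exists a unique x ∈ ℚ satisfying the four Moore–Penrose equations: axa = a, xax = x, (ax)† = ax, and (xa)† = xa. (This element is called the Moore–Penrose inverse a⁺ of a.) -/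
/-!
Uniqueness holds in any semigroup with an anti-multiplicative map `σ`: the four equations force
`a x = a y` and `x a = y a`, hence `x = x a x = y a y = y`.

For existence, write `N(a) = a a* = Σ aᵢ²` (the complex quaternionic norm) and
`‖a‖² = Σ |aᵢ|²`. If `N(a) ≠ 0` then `a` is invertible with inverse `N(a)⁻¹ a*`, which is its
Moore–Penrose inverse. Otherwise a direct computation gives `a a† a = 2‖a‖² a`, and for `a ≠ 0`
the element `(2‖a‖²)⁻¹ a†` satisfies the four equations.
-/

open Quaternion Complex

noncomputable section

/-- The Hermitian conjugate a† of a complex quaternion. -/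
def hconj (a : ℍ[ℂ]) : ℍ[ℂ] :=
  ⟨(starRingEnd ℂ) a.re, -((starRingEnd ℂ) a.imI),
   -((starRingEnd ℂ) a.imJ), -((starRingEnd ℂ) a.imK)⟩

section MoorePenrose

variable {R : Type*}

def IsMoorePenroseInverse [Mul R] (σ : R → R) (a x : R) : Prop :=
  a * x * a = a ∧ x * a * x = x ∧ σ (a * x) = a * x ∧ σ (x * a) = x * a

theorem IsMoorePenroseInverse.unique [Semigroup R] {σ : R → R}
    (hσ : ∀ x y, σ (x * y) = σ y * σ x) {a x y : R}
    (hx : IsMoorePenroseInverse σ a x) (hy : IsMoorePenroseInverse σ a y) : x = y := by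
  obtain ⟨hx₁, hx₂, hx₃, hx₄⟩ := hx
  obtain ⟨hy₁, hy₂, hy₃, hy₄⟩ := hy
  have hax : a * x = a * y :=
    calc a * x = a * y * (a * x) := by rw [← mul_assoc, hy₁]
      _ = σ (a * x * (a * y)) := by rw [hσ, hx₃, hy₃]
      _ = a * y := by rw [← mul_assoc, hx₁, hy₃]
  have hxa : x * a = y * a :=
    calc x * a = x * a * (y * a) := by rw [mul_assoc, ← mul_assoc a, hy₁]
      _ = σ (y * a * (x * a)) := by rw [hσ, hx₄, hy₄]
      _ = y * a := by rw [mul_assoc, ← mul_assoc a, hx₁, hy₄]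
  calc x = x * a * x := hx₂.symm
    _ = y * a * y := by rw [mul_assoc, hax, ← mul_assoc, hxa]
    _ = y := hy₂

theorem isMoorePenroseInverse_of_mul_eq_one [MulOneClass R] {σ : R → R} (hσ : σ 1 = 1)
    {a x : R} (hax : a * x = 1) (hxa : x * a = 1) : IsMoorePenroseInverse σ a x :=
  ⟨by rw [hax, one_mul], by rw [hxa, one_mul], by rw [hax, hσ], by rw [hxa, hσ]⟩

theorem isMoorePenroseInverse_inv_smul_of_mul_mul_eq_smul {K : Type*} [Field K] [Ring R] [Algebra K R]
    {σ : R → R} (hσ_mul : ∀ x y, σ (x * y) = σ y * σ x) (hσ_invol : ∀ x, σ (σ x) = x)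
    (hσ_smul : ∀ (c : K) x, σ (c • x) = c • σ x) {a : R} {t : K} (ht : t ≠ 0)
    (h : a * σ a * a = t • a) : IsMoorePenroseInverse σ a (t⁻¹ • σ a) := by
  have h' : σ a * a * σ a = t • σ a := by
    rw [← hσ_smul, ← h, hσ_mul, hσ_mul, hσ_invol, mul_assoc]
  refine ⟨?_, ?_, ?_, ?_⟩
  · rw [mul_smul_comm, smul_mul_assoc, h, smul_smul, inv_mul_cancel₀ ht, one_smul]
  · rw [smul_mul_assoc, smul_mul_assoc, mul_smul_comm, h', smul_smul, smul_smul,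
      inv_mul_cancel_right₀ ht]
  · rw [mul_smul_comm, hσ_smul, hσ_mul, hσ_invol]
  · rw [smul_mul_assoc, hσ_smul, hσ_mul, hσ_invol]

end MoorePenrose

@[simp] lemma hconj_re (a : ℍ[ℂ]) : (hconj a).re = (starRingEnd ℂ) a.re := rfl
@[simp] lemma hconj_imI (a : ℍ[ℂ]) : (hconj a).imI = -(starRingEnd ℂ) a.imI := rfl
@[simp] lemma hconj_imJ (a : ℍ[ℂ]) : (hconj a).imJ = -(starRingEnd ℂ) a.imJ := rfl
@[simp] lemma hconj_imK (a : ℍ[ℂ]) : (hconj a).imK = -(starRingEnd ℂ) a.imK := rfl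

lemma hconj_mul (p q : ℍ[ℂ]) : hconj (p * q) = hconj q * hconj p := by
  ext <;> simp <;> ring

lemma hconj_hconj (p : ℍ[ℂ]) : hconj (hconj p) = p := by
  ext <;> simp

lemma hconj_zero : hconj 0 = 0 := by
  ext <;> simp

lemma hconj_one : hconj 1 = 1 := by
  ext <;> simp

lemma hconj_real_smul (r : ℝ) (q : ℍ[ℂ]) : hconj (r • q) = r • hconj q := by
  ext <;> simp [Complex.real_smul]

def hnormSq (a : ℍ[ℂ]) : ℝ :=
  Complex.normSq a.re + Complex.normSq a.imI + Complex.normSq a.imJ + Complex.normSq a.imK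

lemma hnormSq_ne_zero {a : ℍ[ℂ]} (ha : a ≠ 0) : hnormSq a ≠ 0 := by
  contrapose! ha
  have := Complex.normSq_nonneg a.re
  have := Complex.normSq_nonneg a.imI
  have := Complex.normSq_nonneg a.imJ
  have := Complex.normSq_nonneg a.imK
  have h₀ : a.re = 0 ∧ a.imI = 0 ∧ a.imJ = 0 ∧ a.imK = 0 := by
    simp only [← Complex.normSq_eq_zero]
    unfold hnormSq at ha
    refine ⟨?_, ?_, ?_, ?_⟩ <;> linarith
  ext <;> simp [h₀]

-- `hconj (star a)` is `a` with its four coefficients conjugated.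
lemma mul_hconj_mul (a : ℍ[ℂ]) :
    a * hconj a * a = (2 * hnormSq a) • a - ↑(Quaternion.normSq a) * hconj (star a) := by
  rw [coe_mul_eq_smul]
  ext <;> simp [hnormSq, normSq_def', Complex.real_smul, ← Complex.mul_conj] <;> ring

lemma mul_inv_normSq_mul_star {a : ℍ[ℂ]} (ha : Quaternion.normSq a ≠ 0) :
    a * (↑(Quaternion.normSq a)⁻¹ * star a) = 1 := by
  rw [← mul_assoc, ← coe_commutes, mul_assoc, self_mul_star, ← coe_mul, inv_mul_cancel₀ ha,
    coe_one]

lemma inv_normSq_mul_star_mul {a : ℍ[ℂ]} (ha : Quaternion.normSq a ≠ 0) :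
    ↑(Quaternion.normSq a)⁻¹ * star a * a = 1 := by
  rw [mul_assoc, star_mul_self, ← coe_mul, inv_mul_cancel₀ ha, coe_one]

theorem exists_isMoorePenroseInverse_hconj (a : ℍ[ℂ]) :
    ∃ x, IsMoorePenroseInverse hconj a x := by
  by_cases hn : Quaternion.normSq a = 0
  · rcases eq_or_ne a 0 with rfl | ha
    · exact ⟨0, by simp [IsMoorePenroseInverse, hconj_zero]⟩
    · have ht : 2 * hnormSq a ≠ 0 := mul_ne_zero two_ne_zero (hnormSq_ne_zero ha)
      refine ⟨_, isMoorePenroseInverse_inv_smul_of_mul_mul_eq_smul hconj_mul hconj_hconj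
        hconj_real_smul ht ?_⟩
      rw [mul_hconj_mul, hn, coe_zero, zero_mul, sub_zero]
  · exact ⟨_, isMoorePenroseInverse_of_mul_eq_one hconj_one
      (mul_inv_normSq_mul_star hn) (inv_normSq_mul_star_mul hn)⟩

theorem stmt_6 (a : ℍ[ℂ]) :
    ∃! x : ℍ[ℂ],
      a * x * a = a ∧ x * a * x = x ∧ hconj (a * x) = a * x ∧ hconj (x * a) = x * a := by
  obtain ⟨x, hx⟩ := exists_isMoorePenroseInverse_hconj a
  exact ⟨x, hx, fun y hy => IsMoorePenroseInverse.unique hconj_mul hy hx⟩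

end
end

section
/- Let a = a₀ + a₁e₁ + a₂e₂ + a₃e₃ ∈ ℚ with (a₁, a₂, a₃) ≠ (0, 0, 0), and suppose a₁² + a₂² + a₃² ≠ 0. Let τ ∈ ℂ be any complex number with τ² = a₁² + a₂² + a₃². Then a is similar over ℚ to a₀ + τ·e₁, i.e., there exists an invertible x ∈ ℚ with x⁻¹ax = a₀ + τ·e₁. -/
open Quaternion Complex

noncomputable section

lemma conj_of (a b x : ℍ[ℂ]) (hn : Quaternion.normSq x ≠ 0) (hab : a * x = x * b) :
    ∃ u : ℍ[ℂ]ˣ, (↑u⁻¹ : ℍ[ℂ]) * a * ↑u = b := by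
  have h1 : x * (star x * (((Quaternion.normSq x)⁻¹ : ℂ) : ℍ[ℂ])) = 1 := by
    rw [← mul_assoc, Quaternion.self_mul_star, ← Quaternion.coe_mul,
      mul_inv_cancel₀ hn, Quaternion.coe_one]
  have h2 : (star x * (((Quaternion.normSq x)⁻¹ : ℂ) : ℍ[ℂ])) * x = 1 := by
    rw [mul_assoc, Quaternion.coe_commutes, ← mul_assoc, Quaternion.star_mul_self,
      ← Quaternion.coe_mul, mul_inv_cancel₀ hn, Quaternion.coe_one]
  refine ⟨⟨x, _, h1, h2⟩, ?_⟩
  show (star x * (((Quaternion.normSq x)⁻¹ : ℂ) : ℍ[ℂ])) * a * x = b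
  rw [mul_assoc, hab, ← mul_assoc, h2, one_mul]

theorem stmt_8 (a : ℍ[ℂ]) (hne : ¬(a.imI = 0 ∧ a.imJ = 0 ∧ a.imK = 0))
    (h : a.imI ^ 2 + a.imJ ^ 2 + a.imK ^ 2 ≠ 0)
    (τ : ℂ) (hτ : τ ^ 2 = a.imI ^ 2 + a.imJ ^ 2 + a.imK ^ 2) :
    ∃ x : ℍ[ℂ]ˣ, (↑x⁻¹ : ℍ[ℂ]) * a * (↑x : ℍ[ℂ]) = (a.re : ℍ[ℂ]) + τ • e1 := by
  have hτ0 : τ ≠ 0 := by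
    intro h0; rw [h0] at hτ; exact h (by rw [← hτ]; ring)
  have hb : (a.re : ℍ[ℂ]) + τ • e1 = ⟨a.re, τ, 0, 0⟩ := by
    ext <;> simp <;> simp [e1]
  rw [hb]
  by_cases hc : a.imI + τ = 0
  · refine conj_of _ _ ⟨-a.imJ, -a.imK, 0, a.imI - τ⟩ ?_ ?_
    · erw [Quaternion.normSq_def']
      intro hz
      apply hτ0
      have h4 : 4 * τ ^ 2 = 0 := by linear_combination hz + hτ + 2 * τ * hc
      exact pow_eq_zero_iff two_ne_zero |>.mp (by linear_combination h4 / 4)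
    · obtain ⟨x, hx⟩ : ∃ x : ℍ[ℂ], x = ⟨-a.imJ, -a.imK, 0, a.imI - τ⟩ := ⟨_, rfl⟩
      obtain ⟨y, hy⟩ : ∃ y : ℍ[ℂ], y = ⟨a.re, τ, 0, 0⟩ := ⟨_, rfl⟩
      rw [← hx, ← hy]
      ext <;> simp only [Quaternion.re_mul, Quaternion.imI_mul, Quaternion.imJ_mul,
        Quaternion.imK_mul] <;> simp [hx, hy] <;>
        first | ring1 | (linear_combination hτ) | (linear_combination -hτ)
  · refine conj_of _ _ ⟨0, a.imI + τ, a.imJ, a.imK⟩ ?_ ?_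
    · erw [Quaternion.normSq_def']
      intro hz
      have h2τ : 2 * τ * (a.imI + τ) = 0 := by linear_combination hz + hτ
      rcases mul_eq_zero.mp h2τ with h1 | h1
      · exact hτ0 (by linear_combination h1 / 2)
      · exact hc h1
    · obtain ⟨x, hx⟩ : ∃ x : ℍ[ℂ], x = ⟨0, a.imI + τ, a.imJ, a.imK⟩ := ⟨_, rfl⟩
      obtain ⟨y, hy⟩ : ∃ y : ℍ[ℂ], y = ⟨a.re, τ, 0, 0⟩ := ⟨_, rfl⟩
      rw [← hx, ← hy]
      ext <;> simp only [Quaternion.re_mul, Quaternion.imI_mul, Quaternion.imJ_mul,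
        Quaternion.imK_mul] <;> simp [hx, hy] <;>
        first | ring1 | (linear_combination hτ) | (linear_combination -hτ)

end
end

section
/- Let a = a₀ + a₁e₁ + a₂e₂ + a₃e₃ ∈ ℚ with (a₁, a₂, a₃) ≠ (0, 0, 0), and suppose a₁² + a₂² + a₃² = 0. Then a is similar over ℚ to a₀ - (1/2)e₂ + (1/2)i·e₃, i.e., there exists an invertible x ∈ ℚ with x⁻¹ax = a₀ - (1/2)e₂ + (1/2)i·e₃. -/
open Quaternion Complex
noncomputable section
private lemma key_comm (r : ℂ) (p n w : ℍ[ℂ]) (hp : p*p = 0) (hn : n*n = 0) :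
    ((r:ℍ[ℂ]) + p) * (p*w + w*n) = (p*w + w*n) * ((r:ℍ[ℂ]) + n) := by
  have h1 : p * (p * w) = 0 := by rw [← mul_assoc, hp, zero_mul]
  have h2 : w * n * n = 0 := by rw [mul_assoc, hn, mul_zero]
  have hc : ∀ z : ℍ[ℂ], z * (r:ℍ[ℂ]) = (r:ℍ[ℂ]) * z := fun z => (Quaternion.coe_commutes r z).symm
  simp only [add_mul, mul_add, h1, h2, mul_assoc, hc]
  abel

private lemma aux_sim (a p n w : ℍ[ℂ]) (ha : a = (a.re : ℍ[ℂ]) + p) (hp : p*p = 0)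
    (hn : n*n = 0) (hns : Quaternion.normSq (p*w + w*n) ≠ 0) :
    ∃ x : ℍ[ℂ]ˣ, (↑x⁻¹ : ℍ[ℂ]) * a * (↑x : ℍ[ℂ]) = (a.re : ℍ[ℂ]) + n := by
  set x : ℍ[ℂ] := p*w + w*n with hx
  set y : ℍ[ℂ] := ((Quaternion.normSq x)⁻¹ : ℂ) * star x with hy
  have hxy : x * y = 1 := by
    rw [hy, ← mul_assoc, ← Quaternion.coe_commutes, mul_assoc, Quaternion.self_mul_star,
      ← Quaternion.coe_mul, inv_mul_cancel₀ hns, Quaternion.coe_one]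
  have hyx : y * x = 1 := by
    rw [hy, mul_assoc, Quaternion.star_mul_self,
      ← Quaternion.coe_mul, inv_mul_cancel₀ hns, Quaternion.coe_one]
  have hax : a * x = x * ((a.re:ℍ[ℂ]) + n) := by
    conv_lhs => rw [ha]
    exact key_comm a.re p n w hp hn
  refine ⟨⟨x, y, hxy, hyx⟩, ?_⟩
  show y * a * x = _
  rw [mul_assoc, hax, ← mul_assoc, hyx, one_mul]

private lemma e2c : e2.re = 0 ∧ e2.imI = 0 ∧ e2.imJ = 1 ∧ e2.imK = 0 := ⟨rfl, rfl, rfl, rfl⟩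

private lemma e3c : e3.re = 0 ∧ e3.imI = 0 ∧ e3.imJ = 0 ∧ e3.imK = 1 := ⟨rfl, rfl, rfl, rfl⟩

theorem stmt_9 (a : ℍ[ℂ]) (hne : ¬(a.imI = 0 ∧ a.imJ = 0 ∧ a.imK = 0))
    (h : a.imI ^ 2 + a.imJ ^ 2 + a.imK ^ 2 = 0) :
    ∃ x : ℍ[ℂ]ˣ,
      (↑x⁻¹ : ℍ[ℂ]) * a * (↑x : ℍ[ℂ]) =
        (a.re : ℍ[ℂ]) - (2 : ℂ)⁻¹ • e2 + ((2 : ℂ)⁻¹ * I) • e3 := by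
  set n : ℍ[ℂ] := ⟨0, 0, -2⁻¹, 2⁻¹ * I⟩ with hn_def
  have hnc : n.re = 0 ∧ n.imI = 0 ∧ n.imJ = -2⁻¹ ∧ n.imK = 2⁻¹ * I := ⟨rfl, rfl, rfl, rfl⟩
  have htarget : (a.re : ℍ[ℂ]) + n = (a.re:ℍ[ℂ]) - (2:ℂ)⁻¹ • e2 + ((2:ℂ)⁻¹*I) • e3 := by
    ext <;> simp [e2c, e3c, hnc] <;> ring
  set p : ℍ[ℂ] := ⟨0, a.imI, a.imJ, a.imK⟩ with hp_def
  have hpc : p.re = 0 ∧ p.imI = a.imI ∧ p.imJ = a.imJ ∧ p.imK = a.imK := ⟨rfl, rfl, rfl, rfl⟩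
  have ha : a = (a.re : ℍ[ℂ]) + p := by ext <;> simp [hpc]
  have hpp : p * p = 0 := by
    ext <;> simp [hpc] <;> (first | linear_combination h | linear_combination -h | linear_combination 2*h | linear_combination -2*h | ring)
  have hnn : n * n = 0 := by
    ext <;> simp [hnc] <;> (first | linear_combination ((1:ℂ)/4) * Complex.I_sq | linear_combination (-(1:ℂ)/4) * Complex.I_sq | linear_combination ((1:ℂ)/2) * Complex.I_sq | linear_combination (-(1:ℂ)/2) * Complex.I_sq | ring)
  have hcase : a.imJ - I * a.imK ≠ 0 ∨ a.imJ + I * a.imK ≠ 0 := by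
    by_contra hco
    push_neg at hco
    obtain ⟨h1, h2⟩ := hco
    have hJ : a.imJ = 0 := by linear_combination 2⁻¹ * h1 + 2⁻¹ * h2
    have hK' : I * a.imK = 0 := by linear_combination 2⁻¹ * h2 - 2⁻¹ * h1
    have hK : a.imK = 0 := by
      rcases mul_eq_zero.1 hK' with h' | h'
      · exact absurd h' I_ne_zero
      · exact h'
    have hI : a.imI = 0 := by
      have h2' : a.imI ^ 2 = 0 := by linear_combination h - a.imJ * hJ - a.imK * hK
      exact pow_eq_zero_iff (two_ne_zero) |>.1 h2'
    exact hne ⟨hI, hJ, hK⟩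
  rcases hcase with hc | hc
  · have hxc : p * 1 + 1 * n = (⟨0, a.imI, a.imJ - 2⁻¹, a.imK + 2⁻¹*I⟩ : ℍ[ℂ]) := by
      ext <;> simp [hpc, hnc] <;> ring
    have hns : Quaternion.normSq (p*1 + 1*n) ≠ 0 := by
      have hval : Quaternion.normSq (p*1 + 1*n) = -(a.imJ - I * a.imK) := by
        rw [Quaternion.normSq_def', hxc]
        show (0:ℂ)^2 + a.imI^2 + (a.imJ - 2⁻¹)^2 + (a.imK + 2⁻¹*I)^2 = _
        linear_combination h + (4⁻¹:ℂ) * Complex.I_sq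
      rw [hval]
      exact neg_ne_zero.2 hc
    obtain ⟨u, hu⟩ := aux_sim a p n 1 ha hpp hnn hns
    exact ⟨u, htarget ▸ hu⟩
  · have hxc : p * e2 + e2 * n = (⟨2⁻¹ - a.imJ, 2⁻¹*I - a.imK, 0, a.imI⟩ : ℍ[ℂ]) := by
      ext <;> simp [hpc, hnc, e2c] <;> ring
    have hns : Quaternion.normSq (p*e2 + e2*n) ≠ 0 := by
      have hval : Quaternion.normSq (p*e2 + e2*n) = -(a.imJ + I * a.imK) := by
        rw [Quaternion.normSq_def', hxc]
        show (2⁻¹ - a.imJ)^2 + (2⁻¹*I - a.imK)^2 + (0:ℂ)^2 + a.imI^2 = _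
        linear_combination h + (4⁻¹:ℂ) * Complex.I_sq
      rw [hval]
      exact neg_ne_zero.2 hc
    obtain ⟨u, hu⟩ := aux_sim a p n e2 ha hpp hnn hns
    exact ⟨u, htarget ▸ hu⟩

end
end

section
/- Let A ∈ ℚ^{n×n}, and suppose λ ∈ ℂ and Y ∈ ℂ^{2n×1} with Y ≠ 0 satisfy Ψ(A)Y = λY. Set X := E_{2n}·Y ∈ ℚ^{n×1}, where E_{2n} = [(1 - i·e₁)I_n, (e₂ + i·e₃)I_n] ∈ ℚ^{n×2n}. Then X ≠ 0 and AX = Xλ; in particular, every eigenvalue of the complex representation Ψ(A) is a right eigenvalue of A. -/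
open Quaternion Matrix Complex

noncomputable section

/-- The complex representation Ψ(A) of a complex quaternion matrix. -/
def Psi {m n : ℕ} (A : Matrix (Fin m) (Fin n) ℍ[ℂ]) :
    Matrix (Fin m ⊕ Fin m) (Fin n ⊕ Fin n) ℂ :=
  Matrix.fromBlocks
    (Matrix.of fun s t => (A s t).re + (A s t).imI * I)
    (Matrix.of fun s t => -((A s t).imJ + (A s t).imK * I))
    (Matrix.of fun s t => (A s t).imJ - (A s t).imK * I)
    (Matrix.of fun s t => (A s t).re - (A s t).imI * I)

/-- The matrix E_{2n} = [(1 - i e₁)Iₙ, (e₂ + i e₃)Iₙ]. -/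
def E2 (n : ℕ) : Matrix (Fin n) (Fin n ⊕ Fin n) ℍ[ℂ] :=
  Matrix.fromCols
    ((1 - I • e1) • (1 : Matrix (Fin n) (Fin n) ℍ[ℂ]))
    ((e2 + I • e3) • (1 : Matrix (Fin n) (Fin n) ℍ[ℂ]))

@[simp] lemma e1_re : e1.re = 0 := rfl
@[simp] lemma e1_imI : e1.imI = 1 := rfl
@[simp] lemma e1_imJ : e1.imJ = 0 := rfl
@[simp] lemma e1_imK : e1.imK = 0 := rfl
@[simp] lemma e2_re : e2.re = 0 := rfl
@[simp] lemma e2_imI : e2.imI = 0 := rfl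
@[simp] lemma e2_imJ : e2.imJ = 1 := rfl
@[simp] lemma e2_imK : e2.imK = 0 := rfl
@[simp] lemma e3_re : e3.re = 0 := rfl
@[simp] lemma e3_imI : e3.imI = 0 := rfl
@[simp] lemma e3_imJ : e3.imJ = 0 := rfl
@[simp] lemma e3_imK : e3.imK = 1 := rfl
attribute [simp] Quaternion.re_smul Quaternion.imI_smul Quaternion.imJ_smul Quaternion.imK_smul
lemma qid1 (q : ℍ[ℂ]) : q * (1 - I • e1) =
    (1 - I • e1) * algebraMap ℂ ℍ[ℂ] (q.re + q.imI * I)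
      + (e2 + I • e3) * algebraMap ℂ ℍ[ℂ] (q.imJ - q.imK * I) := by
  ext <;> simp [Complex.ext_iff, mul_comm] <;> ring_nf <;> simp

lemma qid2 (q : ℍ[ℂ]) : q * (e2 + I • e3) =
    (1 - I • e1) * algebraMap ℂ ℍ[ℂ] (-(q.imJ + q.imK * I))
      + (e2 + I • e3) * algebraMap ℂ ℍ[ℂ] (q.re - q.imI * I) := by
  ext <;> simp [Complex.ext_iff, mul_comm] <;> ring_nf <;> simp

lemma keyE2 (n : ℕ) (A : Matrix (Fin n) (Fin n) ℍ[ℂ]) :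
    A * E2 n = E2 n * (Psi A).map (algebraMap ℂ ℍ[ℂ]) := by
  refine Matrix.ext fun s j => ?_
  cases j with
  | inl t =>
      simpa [E2, Psi, Matrix.mul_apply, Fintype.sum_sum_type, Matrix.one_apply,
        smul_ite, mul_ite, Finset.sum_ite_eq, Finset.sum_ite_eq', smul_eq_mul]
        using qid1 (A s t)
  | inr t =>
      simpa [E2, Psi, Matrix.mul_apply, Fintype.sum_sum_type, Matrix.one_apply,
        smul_ite, mul_ite, Finset.sum_ite_eq, Finset.sum_ite_eq', smul_eq_mul]
        using qid2 (A s t)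

lemma comp_re (c d : ℂ) :
    ((1 - I • e1) * algebraMap ℂ ℍ[ℂ] c + (e2 + I • e3) * algebraMap ℂ ℍ[ℂ] d).re = c := by
  simp

lemma comp_imJ (c d : ℂ) :
    ((1 - I • e1) * algebraMap ℂ ℍ[ℂ] c + (e2 + I • e3) * algebraMap ℂ ℍ[ℂ] d).imJ = d := by
  simp

theorem stmt_16 (n : ℕ) (A : Matrix (Fin n) (Fin n) ℍ[ℂ]) (lam : ℂ)
    (Y : Matrix (Fin n ⊕ Fin n) (Fin 1) ℂ) (hY : Y ≠ 0)
    (hEig : Psi A * Y = lam • Y)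
    (X : Matrix (Fin n) (Fin 1) ℍ[ℂ]) (hX : X = E2 n * Y.map (algebraMap ℂ ℍ[ℂ])) :
    X ≠ 0 ∧ A * X = X * Matrix.diagonal (fun _ : Fin 1 => (algebraMap ℂ ℍ[ℂ]) lam) := by
  have hXs : ∀ s : Fin n, X s 0 =
      (1 - I • e1) * algebraMap ℂ ℍ[ℂ] (Y (Sum.inl s) 0)
        + (e2 + I • e3) * algebraMap ℂ ℍ[ℂ] (Y (Sum.inr s) 0) := by
    intro s
    simp [hX, E2, Matrix.mul_apply, Fintype.sum_sum_type, Matrix.one_apply,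
      smul_ite, mul_ite, Finset.sum_ite_eq, Finset.sum_ite_eq', smul_eq_mul]
  constructor
  · intro h0
    apply hY
    refine Matrix.ext fun j k => ?_
    have hk : k = 0 := Subsingleton.elim _ _
    subst hk
    cases j with
    | inl s =>
        have h := hXs s
        rw [h0] at h
        have h2 := congrArg QuaternionAlgebra.re h
        rw [comp_re] at h2
        simpa using h2.symm
    | inr s =>
        have h := hXs s
        rw [h0] at h
        have h2 := congrArg QuaternionAlgebra.imJ h
        rw [comp_imJ] at h2
        simpa using h2.symm
  · have hsmul : (lam • Y).map (algebraMap ℂ ℍ[ℂ]) =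
        Y.map (algebraMap ℂ ℍ[ℂ]) *
          Matrix.diagonal (fun _ : Fin 1 => (algebraMap ℂ ℍ[ℂ]) lam) := by
      refine Matrix.ext fun s t => ?_
      simp [Matrix.mul_diagonal, Matrix.map_apply, smul_eq_mul, _root_.map_mul]
      exact Algebra.commutes lam _
    calc A * X = (A * E2 n) * Y.map (algebraMap ℂ ℍ[ℂ]) := by
          rw [hX, Matrix.mul_assoc]
      _ = E2 n * ((Psi A * Y).map (algebraMap ℂ ℍ[ℂ])) := by
          rw [keyE2, Matrix.mul_assoc, ← Matrix.map_mul]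
      _ = E2 n * ((lam • Y).map (algebraMap ℂ ℍ[ℂ])) := by rw [hEig]
      _ = X * Matrix.diagonal (fun _ : Fin 1 => (algebraMap ℂ ℍ[ℂ]) lam) := by
          rw [hsmul, ← Matrix.mul_assoc, ← hX]

end
end

section
/- Two square complex quaternion matrices A, B ∈ ℚ^{n×n} are similar over ℚ (i.e., there exists an invertible X ∈ ℚ^{n×n} with X⁻¹AX = B) if and only if their complex representations Ψ(A) and Ψ(B) are similar over ℂ (i.e., there exists an invertible Y ∈ ℂ^{2n×2n} with Y⁻¹Ψ(A)Y = Ψ(B)). -/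
open Quaternion Matrix Complex

noncomputable section

namespace PsiAux

/-- Inverse of Ψ. -/
def PsiInv {m n : ℕ} (M : Matrix (Fin m ⊕ Fin m) (Fin n ⊕ Fin n) ℂ) :
    Matrix (Fin m) (Fin n) ℍ[ℂ] :=
  Matrix.of fun s t =>
    ⟨(M (Sum.inl s) (Sum.inl t) + M (Sum.inr s) (Sum.inr t)) / 2,
     (M (Sum.inl s) (Sum.inl t) - M (Sum.inr s) (Sum.inr t)) / (2 * I),
     (M (Sum.inr s) (Sum.inl t) - M (Sum.inl s) (Sum.inr t)) / 2,
     -(M (Sum.inr s) (Sum.inl t) + M (Sum.inl s) (Sum.inr t)) / (2 * I)⟩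

lemma re_sum {α : Type*} (s : Finset α) (f : α → ℍ[ℂ]) :
    (∑ k ∈ s, f k).re = ∑ k ∈ s, (f k).re :=
  map_sum (QuaternionAlgebra.reₗ (R := ℂ) (-1) 0 (-1)) f s

lemma imI_sum {α : Type*} (s : Finset α) (f : α → ℍ[ℂ]) :
    (∑ k ∈ s, f k).imI = ∑ k ∈ s, (f k).imI :=
  map_sum (QuaternionAlgebra.imIₗ (R := ℂ) (-1) 0 (-1)) f s

lemma imJ_sum {α : Type*} (s : Finset α) (f : α → ℍ[ℂ]) :
    (∑ k ∈ s, f k).imJ = ∑ k ∈ s, (f k).imJ :=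
  map_sum (QuaternionAlgebra.imJₗ (R := ℂ) (-1) 0 (-1)) f s

lemma imK_sum {α : Type*} (s : Finset α) (f : α → ℍ[ℂ]) :
    (∑ k ∈ s, f k).imK = ∑ k ∈ s, (f k).imK :=
  map_sum (QuaternionAlgebra.imKₗ (R := ℂ) (-1) 0 (-1)) f s

lemma aux11 (a b : ℍ[ℂ]) :
    (a * b).re + (a * b).imI * I
      = (a.re + a.imI * I) * (b.re + b.imI * I)
        + (-(a.imJ + a.imK * I)) * (b.imJ - b.imK * I) := by
  rw [Quaternion.re_mul, Quaternion.imI_mul]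
  linear_combination (-(a.imI * b.imI + a.imK * b.imK)) * Complex.I_sq

lemma aux12 (a b : ℍ[ℂ]) :
    -((a * b).imJ + (a * b).imK * I)
      = (a.re + a.imI * I) * (-(b.imJ + b.imK * I))
        + (-(a.imJ + a.imK * I)) * (b.re - b.imI * I) := by
  rw [Quaternion.imJ_mul, Quaternion.imK_mul]
  linear_combination (-(a.imK * b.imI - a.imI * b.imK)) * Complex.I_sq

lemma aux21 (a b : ℍ[ℂ]) :
    (a * b).imJ - (a * b).imK * I
      = (a.imJ - a.imK * I) * (b.re + b.imI * I)
        + (a.re - a.imI * I) * (b.imJ - b.imK * I) := by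
  rw [Quaternion.imJ_mul, Quaternion.imK_mul]
  linear_combination (-(a.imI * b.imK - a.imK * b.imI)) * Complex.I_sq

lemma aux22 (a b : ℍ[ℂ]) :
    (a * b).re - (a * b).imI * I
      = (a.imJ - a.imK * I) * (-(b.imJ + b.imK * I))
        + (a.re - a.imI * I) * (b.re - b.imI * I) := by
  rw [Quaternion.re_mul, Quaternion.imI_mul]
  linear_combination (-(a.imI * b.imI + a.imK * b.imK)) * Complex.I_sq

lemma psi_mul {n : ℕ} (A B : Matrix (Fin n) (Fin n) ℍ[ℂ]) :
    Psi (A * B) = Psi A * Psi B := by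
  rw [Psi, Psi, Psi, Matrix.fromBlocks_multiply]
  ext i j
  cases i with
  | inl s =>
    cases j with
    | inl t =>
      simp only [Matrix.fromBlocks_apply₁₁, Matrix.add_apply, Matrix.mul_apply,
        Matrix.of_apply, re_sum, imI_sum, Finset.sum_mul, ← Finset.sum_add_distrib]
      exact Finset.sum_congr rfl fun k _ => aux11 _ _
    | inr t =>
      simp only [Matrix.fromBlocks_apply₁₂, Matrix.add_apply, Matrix.mul_apply,
        Matrix.of_apply, imJ_sum, imK_sum, Finset.sum_mul, ← Finset.sum_add_distrib,
        ← Finset.sum_neg_distrib]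
      exact Finset.sum_congr rfl fun k _ => aux12 _ _
  | inr s =>
    cases j with
    | inl t =>
      simp only [Matrix.fromBlocks_apply₂₁, Matrix.add_apply, Matrix.mul_apply,
        Matrix.of_apply, imJ_sum, imK_sum, Finset.sum_mul, ← Finset.sum_sub_distrib,
        ← Finset.sum_add_distrib]
      exact Finset.sum_congr rfl fun k _ => aux21 _ _
    | inr t =>
      simp only [Matrix.fromBlocks_apply₂₂, Matrix.add_apply, Matrix.mul_apply,
        Matrix.of_apply, re_sum, imI_sum, Finset.sum_mul, ← Finset.sum_sub_distrib,
        ← Finset.sum_add_distrib]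
      exact Finset.sum_congr rfl fun k _ => aux22 _ _

lemma psi_add {n : ℕ} (A B : Matrix (Fin n) (Fin n) ℍ[ℂ]) :
    Psi (A + B) = Psi A + Psi B := by
  ext i j
  cases i <;> cases j <;>
    simp [Psi, Matrix.fromBlocks, Matrix.add_apply] <;> ring

lemma psiInv_psi {n : ℕ} (A : Matrix (Fin n) (Fin n) ℍ[ℂ]) : PsiInv (Psi A) = A := by
  ext s t <;>
    · simp only [PsiInv, Psi, Matrix.of_apply, Matrix.fromBlocks_apply₁₁,
        Matrix.fromBlocks_apply₁₂, Matrix.fromBlocks_apply₂₁, Matrix.fromBlocks_apply₂₂]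
      erw [Matrix.of_apply]
      field_simp [Complex.I_ne_zero]
      try ring

lemma psi_psiInv {n : ℕ} (M : Matrix (Fin n ⊕ Fin n) (Fin n ⊕ Fin n) ℂ) :
    Psi (PsiInv M) = M := by
  ext i j
  cases i <;> cases j <;>
    · simp only [Psi, PsiInv, Matrix.of_apply, Matrix.fromBlocks_apply₁₁,
        Matrix.fromBlocks_apply₁₂, Matrix.fromBlocks_apply₂₁, Matrix.fromBlocks_apply₂₂]
      erw [Matrix.of_apply]
      field_simp [Complex.I_ne_zero]
      ring

/-- Ψ as a ring isomorphism. -/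
def psiEquiv (n : ℕ) :
    Matrix (Fin n) (Fin n) ℍ[ℂ] ≃+* Matrix (Fin n ⊕ Fin n) (Fin n ⊕ Fin n) ℂ where
  toFun := Psi
  invFun := PsiInv
  left_inv := psiInv_psi
  right_inv := psi_psiInv
  map_mul' := psi_mul
  map_add' := psi_add

end PsiAux

open PsiAux

theorem stmt_18 (n : ℕ) (A B : Matrix (Fin n) (Fin n) ℍ[ℂ]) :
    (∃ X : (Matrix (Fin n) (Fin n) ℍ[ℂ])ˣ, X.inv * A * X.val = B) ↔
      (∃ Y : (Matrix (Fin n ⊕ Fin n) (Fin n ⊕ Fin n) ℂ)ˣ,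
        Y.inv * Psi A * Y.val = Psi B) := by
  constructor
  · rintro ⟨X, hX⟩
    refine ⟨Units.map (psiEquiv n).toRingHom.toMonoidHom X, ?_⟩
    have h1 : (Units.map (psiEquiv n).toRingHom.toMonoidHom X).inv = Psi X.inv := rfl
    have h2 : (Units.map (psiEquiv n).toRingHom.toMonoidHom X).val = Psi X.val := rfl
    rw [h1, h2, ← psi_mul, ← psi_mul, hX]
  · rintro ⟨Y, hY⟩
    refine ⟨Units.map (psiEquiv n).symm.toRingHom.toMonoidHom Y, ?_⟩
    have h1 : (Units.map (psiEquiv n).symm.toRingHom.toMonoidHom Y).inv = PsiInv Y.inv := rfl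
    have h2 : (Units.map (psiEquiv n).symm.toRingHom.toMonoidHom Y).val = PsiInv Y.val := rfl
    have hA : A = PsiInv (Psi A) := (psiInv_psi A).symm
    have hmul : ∀ M N : Matrix (Fin n ⊕ Fin n) (Fin n ⊕ Fin n) ℂ,
        PsiInv (M * N) = PsiInv M * PsiInv N := fun M N => map_mul (psiEquiv n).symm M N
    rw [h1, h2, hA, ← hmul, ← hmul, hY, psiInv_psi]

end
end

section
/- (Cayley–Hamilton theorem for complex quaternion matrices) Let A ∈ ℚ^{n×n} and let p_A(λ) = det(λ·I_{2n} - Ψ(A)) ∈ ℂ[λ] be the characteristic polynomial of the complex representation Ψ(A) ∈ ℂ^{2n×2n}. Then evaluating p_A at A, using the ℂ-algebra structure of ℚ^{n×n} (complex scalars acting via the embedding ℂ → ℚ), gives the zero matrix: p_A(A) = 0. -/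
open Quaternion Matrix Complex Polynomial

noncomputable section

lemma re_sum {α : Type*} (s : Finset α) (f : α → ℍ[ℂ]) :
    (∑ x ∈ s, f x).re = ∑ x ∈ s, (f x).re :=
  map_sum (QuaternionAlgebra.reₗ (-1 : ℂ) 0 (-1)) f s

lemma imI_sum {α : Type*} (s : Finset α) (f : α → ℍ[ℂ]) :
    (∑ x ∈ s, f x).imI = ∑ x ∈ s, (f x).imI :=
  map_sum (QuaternionAlgebra.imIₗ (-1 : ℂ) 0 (-1)) f s

lemma imJ_sum {α : Type*} (s : Finset α) (f : α → ℍ[ℂ]) :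
    (∑ x ∈ s, f x).imJ = ∑ x ∈ s, (f x).imJ :=
  map_sum (QuaternionAlgebra.imJₗ (-1 : ℂ) 0 (-1)) f s

lemma imK_sum {α : Type*} (s : Finset α) (f : α → ℍ[ℂ]) :
    (∑ x ∈ s, f x).imK = ∑ x ∈ s, (f x).imK :=
  map_sum (QuaternionAlgebra.imKₗ (-1 : ℂ) 0 (-1)) f s

lemma quat_block11 (a b : ℍ[ℂ]) :
    (a * b).re + (a * b).imI * I =
      ((a.re + a.imI * I) * (b.re + b.imI * I) +
        (-(a.imJ + a.imK * I)) * (b.imJ - b.imK * I)) := by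
  simp only [Quaternion.re_mul, Quaternion.imI_mul]
  linear_combination (-(a.imI * b.imI + a.imK * b.imK)) * Complex.I_mul_I

lemma quat_block12 (a b : ℍ[ℂ]) :
    -((a * b).imJ + (a * b).imK * I) =
      ((a.re + a.imI * I) * (-(b.imJ + b.imK * I)) +
        (-(a.imJ + a.imK * I)) * (b.re - b.imI * I)) := by
  simp only [Quaternion.imJ_mul, Quaternion.imK_mul]
  linear_combination (a.imI * b.imK - a.imK * b.imI) * Complex.I_mul_I

lemma quat_block21 (a b : ℍ[ℂ]) :
    (a * b).imJ - (a * b).imK * I =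
      ((a.imJ - a.imK * I) * (b.re + b.imI * I) +
        (a.re - a.imI * I) * (b.imJ - b.imK * I)) := by
  simp only [Quaternion.imJ_mul, Quaternion.imK_mul]
  linear_combination (a.imK * b.imI - a.imI * b.imK) * Complex.I_mul_I

lemma quat_block22 (a b : ℍ[ℂ]) :
    (a * b).re - (a * b).imI * I =
      ((a.imJ - a.imK * I) * (-(b.imJ + b.imK * I)) +
        (a.re - a.imI * I) * (b.re - b.imI * I)) := by
  simp only [Quaternion.re_mul, Quaternion.imI_mul]
  linear_combination (-(a.imI * b.imI + a.imK * b.imK)) * Complex.I_mul_I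

/-- `Psi` as a `ℂ`-algebra homomorphism on square matrices. -/
def PsiHom (n : ℕ) : Matrix (Fin n) (Fin n) ℍ[ℂ] →ₐ[ℂ]
    Matrix (Fin n ⊕ Fin n) (Fin n ⊕ Fin n) ℂ where
  toFun := Psi
  map_one' := by
    ext (s | s) (t | t) <;>
      · simp only [Psi, Matrix.fromBlocks_apply₁₁, Matrix.fromBlocks_apply₁₂,
          Matrix.fromBlocks_apply₂₁, Matrix.fromBlocks_apply₂₂, Matrix.of_apply,
          Matrix.one_apply]
        by_cases h : s = t <;> simp [h]
  map_mul' := fun A B => by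
    have h : ∀ (X Y : Fin n → ℍ[ℂ]) (q : ℍ[ℂ] → ℍ[ℂ] → ℂ)
        (g : ℍ[ℂ] → ℍ[ℂ] → ℂ), True := fun _ _ _ _ => trivial
    ext (s | s) (t | t) <;>
      simp only [Psi, Matrix.fromBlocks_apply₁₁, Matrix.fromBlocks_apply₁₂,
        Matrix.fromBlocks_apply₂₁, Matrix.fromBlocks_apply₂₂, Matrix.of_apply,
        Matrix.mul_apply, _root_.re_sum, _root_.imI_sum, _root_.imJ_sum, _root_.imK_sum,
        Fintype.sum_sum_type, Finset.sum_mul, sub_eq_add_neg, neg_add,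
        ← Finset.sum_neg_distrib, ← Finset.sum_add_distrib]
    · exact Finset.sum_congr rfl fun k _ => by linear_combination quat_block11 (A s k) (B k t)
    · exact Finset.sum_congr rfl fun k _ => by linear_combination quat_block12 (A s k) (B k t)
    · exact Finset.sum_congr rfl fun k _ => by linear_combination quat_block21 (A s k) (B k t)
    · exact Finset.sum_congr rfl fun k _ => by linear_combination quat_block22 (A s k) (B k t)
  map_zero' := by
    ext (s | s) (t | t) <;> simp [Psi]
  map_add' := fun A B => by
    ext (s | s) (t | t) <;> · simp [Psi]; ring
  commutes' := fun c => by
    ext (s | s) (t | t) <;>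
      · simp only [Psi, Matrix.fromBlocks_apply₁₁, Matrix.fromBlocks_apply₁₂,
          Matrix.fromBlocks_apply₂₁, Matrix.fromBlocks_apply₂₂, Matrix.of_apply,
          Matrix.algebraMap_matrix_apply]
        by_cases h : s = t <;> simp [h]

lemma Psi_injective (n : ℕ) :
    Function.Injective (Psi (m := n) (n := n)) := by
  intro X Y h
  refine Matrix.ext fun s t => ?_
  have h1 := congrFun (congrFun h (Sum.inl s)) (Sum.inl t)
  have h2 := congrFun (congrFun h (Sum.inl s)) (Sum.inr t)
  have h3 := congrFun (congrFun h (Sum.inr s)) (Sum.inl t)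
  have h4 := congrFun (congrFun h (Sum.inr s)) (Sum.inr t)
  simp only [Psi, Matrix.fromBlocks_apply₁₁, Matrix.fromBlocks_apply₁₂,
    Matrix.fromBlocks_apply₂₁, Matrix.fromBlocks_apply₂₂, Matrix.of_apply] at h1 h2 h3 h4
  have e1 : (X s t).re = (Y s t).re := by linear_combination (h1 + h4) / 2
  have e2 : (X s t).imI = (Y s t).imI := by
    linear_combination (-(I/2)) * (h1 - h4) + ((X s t).imI - (Y s t).imI) * Complex.I_mul_I
  have e3 : (X s t).imJ = (Y s t).imJ := by linear_combination (h3 - h2) / 2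
  have e4 : (X s t).imK = (Y s t).imK := by
    linear_combination (I/2) * (h2 + h3) + ((X s t).imK - (Y s t).imK) * Complex.I_mul_I
  exact QuaternionAlgebra.ext e1 e2 e3 e4

lemma Psi_eq_PsiHom (n : ℕ) (A : Matrix (Fin n) (Fin n) ℍ[ℂ]) : Psi A = PsiHom n A := rfl

theorem stmt_19 (n : ℕ) (A : Matrix (Fin n) (Fin n) ℍ[ℂ]) :
    (Polynomial.aeval A) (Matrix.charpoly (Psi A)) = 0 := by
  apply Psi_injective n
  rw [Psi_eq_PsiHom, ← Polynomial.aeval_algHom_apply (PsiHom n) A, ← Psi_eq_PsiHom]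
  rw [Matrix.aeval_self_charpoly]
  ext (s | s) (t | t) <;> simp [Psi]

end
end
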